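/- Using the closed form of Proposition 2, the dual function admits the explicit expression h(μ) = min_{i∈I} Σ_{b∈B} min(0, min_{k∈K}(w_b − r_{kbi} μ_k)) + Σ_k d_k μ_k for all μ ≥ 0. -/

import Mathlib

/-- The polytope X. -/
def InnerX {K B I : Type*} [Fintype K] [Fintype B] [Fintype I]
    (α : K → B → I → ℝ) (π : I → ℝ) : Prop :=
  (∀ k b i, 0 ≤ α k b i) ∧ (∀ b i, ∑ k, α k b i ≤ π i) ∧
  (∀ i, 0 ≤ π i) ∧ (∑ i, π i = 1)

/-!
For fixed `π`, the objective splits into independent blocks indexed by `(b, i)`: minimising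
`∑ k, α k b i * c k b i` over `α ≥ 0` with `∑ k, α k b i ≤ π i` gives `π i * min 0 (min_k c k b i)`,
by putting all the mass `π i` on a cheapest `k` if its cost is negative and none otherwise.
What remains is a linear function of `π` on the simplex, minimised at a vertex.
-/

open Finset

theorem mul_le_sum_mul_of_nonpos {ι : Type*} (s : Finset ι) {a c : ι → ℝ} {m p : ℝ}
    (ha : ∀ k ∈ s, 0 ≤ a k) (hap : ∑ k ∈ s, a k ≤ p) (hm : m ≤ 0) (hmc : ∀ k ∈ s, m ≤ c k) :
    p * m ≤ ∑ k ∈ s, a k * c k :=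
  calc p * m ≤ (∑ k ∈ s, a k) * m := mul_le_mul_of_nonpos_right hap hm
    _ = ∑ k ∈ s, a k * m := sum_mul _ _ _
    _ ≤ ∑ k ∈ s, a k * c k :=
        sum_le_sum fun k hk => mul_le_mul_of_nonneg_left (hmc k hk) (ha k hk)

theorem exists_sum_mul_eq_min_zero_inf' {K : Type*} [Fintype K] [Nonempty K] (c : K → ℝ) :
    ∃ a : K → ℝ, (∀ k, 0 ≤ a k) ∧ ∑ k, a k ≤ 1 ∧
      ∑ k, a k * c k = min 0 (univ.inf' univ_nonempty c) := by
  classical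
  obtain ⟨k₀, -, hk₀⟩ := exists_mem_eq_inf' univ_nonempty c
  rw [hk₀]
  by_cases hneg : c k₀ ≤ 0
  · refine ⟨Pi.single k₀ 1, fun k => ?_, by simp, ?_⟩
    · by_cases hk : k = k₀ <;> simp [hk]
    · simp [Pi.single_apply, min_eq_right hneg]
  · exact ⟨0, fun _ => le_rfl, by simp, by simp [min_eq_left (not_le.mp hneg).le]⟩

section InnerX

variable {K B I : Type*} [Fintype K] [Fintype B] [Fintype I] [Nonempty K] [Nonempty I]

theorem inf'_sum_min_zero_le_of_innerX (c : K → B → I → ℝ) {α : K → B → I → ℝ} {π : I → ℝ}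
    (h : InnerX α π) :
    univ.inf' univ_nonempty (fun i => ∑ b, min 0 (univ.inf' univ_nonempty fun k => c k b i)) ≤
      ∑ k, ∑ b, ∑ i, α k b i * c k b i := by
  obtain ⟨hα, hαπ, hπ, hπ_one⟩ := h
  set M : I → ℝ := fun i => ∑ b, min 0 (univ.inf' univ_nonempty fun k => c k b i)
  have hblock (i : I) : π i * M i ≤ ∑ b, ∑ k, α k b i * c k b i := by
    rw [mul_sum]
    exact sum_le_sum fun b _ => mul_le_sum_mul_of_nonpos _ (fun k _ => hα k b i) (hαπ b i)
      (min_le_left _ _) fun k _ => (min_le_right _ _).trans (inf'_le _ (mem_univ k))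
  have hreorder : ∑ k, ∑ b, ∑ i, α k b i * c k b i = ∑ i, ∑ b, ∑ k, α k b i * c k b i := by
    rw [sum_comm, sum_congr rfl fun b _ => sum_comm, sum_comm]
  calc univ.inf' univ_nonempty M = ∑ i, π i * univ.inf' univ_nonempty M := by
        rw [← sum_mul, hπ_one, one_mul]
    _ ≤ ∑ i, π i * M i :=
        sum_le_sum fun i _ => mul_le_mul_of_nonneg_left (inf'_le _ (mem_univ i)) (hπ i)
    _ ≤ ∑ k, ∑ b, ∑ i, α k b i * c k b i := hreorder ▸ sum_le_sum fun i _ => hblock i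

theorem exists_innerX_sum_eq_inf'_sum_min_zero (c : K → B → I → ℝ) :
    ∃ (α : K → B → I → ℝ) (π : I → ℝ), InnerX α π ∧
      ∑ k, ∑ b, ∑ i, α k b i * c k b i =
        univ.inf' univ_nonempty (fun i => ∑ b, min 0 (univ.inf' univ_nonempty fun k => c k b i)) := by
  classical
  obtain ⟨i₀, -, hi₀⟩ := exists_mem_eq_inf' univ_nonempty
    (fun i => ∑ b, min 0 (univ.inf' univ_nonempty fun k => c k b i))
  choose a ha_nonneg ha_sum ha_value using fun b => exists_sum_mul_eq_min_zero_inf' (c · b i₀)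
  refine ⟨fun k b i => if i = i₀ then a b k else 0, fun i => if i = i₀ then 1 else 0,
    ⟨fun k b i => ?_, fun b i => ?_, fun i => ?_, by simp⟩, ?_⟩
  · dsimp only; split_ifs <;> simp [ha_nonneg]
  · dsimp only; split_ifs <;> simp [ha_sum]
  · dsimp only; split_ifs <;> simp
  · rw [hi₀, sum_comm]
    simp [ha_value]

end InnerX

theorem stmt_13_general {K B I : Type*} [Fintype K] [Fintype B] [Fintype I]
    [Nonempty K] [Nonempty I]
    (w : B → ℝ) (r : K → B → I → ℝ) (d : K → ℝ)
    (μ : K → ℝ) :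
    sInf {v : ℝ | ∃ (α : K → B → I → ℝ) (π : I → ℝ), InnerX α π ∧
        v = (∑ k, ∑ b, ∑ i, α k b i * (w b - r k b i * μ k)) +
          ∑ k, d k * μ k} =
      (Finset.univ.inf' Finset.univ_nonempty (fun i : I =>
        ∑ b, min 0 (Finset.univ.inf' Finset.univ_nonempty
          (fun k : K => w b - r k b i * μ k)))) + ∑ k, d k * μ k := by
  set c : K → B → I → ℝ := fun k b i => w b - r k b i * μ k
  refine IsLeast.csInf_eq ⟨?_, ?_⟩
  · obtain ⟨α, π, hX, hvalue⟩ := exists_innerX_sum_eq_inf'_sum_min_zero c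
    exact ⟨α, π, hX, by rw [hvalue]⟩
  · rintro v ⟨α, π, hX, rfl⟩
    exact add_le_add_left (inf'_sum_min_zero_le_of_innerX c hX) _

/-- Explicit expression for the dual function:
h(μ) = min_i Σ_b min(0, min_k (w_b − r_{kbi} μ_k)) + Σ_k d_k μ_k. -/
theorem stmt_13 {K B I : Type*} [Fintype K] [Fintype B] [Fintype I]
    [Nonempty K] [Nonempty I]
    (w : B → ℝ) (r : K → B → I → ℝ) (d : K → ℝ)
    (μ : K → ℝ) (hμ : ∀ k, 0 ≤ μ k) :
    sInf {v : ℝ | ∃ (α : K → B → I → ℝ) (π : I → ℝ), InnerX α π ∧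
        v = (∑ k, ∑ b, ∑ i, α k b i * (w b - r k b i * μ k)) +
          ∑ k, d k * μ k} =
      (Finset.univ.inf' Finset.univ_nonempty (fun i : I =>
        ∑ b, min 0 (Finset.univ.inf' Finset.univ_nonempty
          (fun k : K => w b - r k b i * μ k)))) + ∑ k, d k * μ k :=
  stmt_13_general w r d μ
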